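/- arXiv:2405.06781 — 6 statements merged into one kernel-verified Lean document; each statement's English description precedes it below -/
import Mathlib

section
/- Let G be a bipartite graph on X ⊔ Y without isolated vertices, and for each subset I ⊆ X let C_I be the set of vertices y ∈ Y whose neighborhood in X is exactly I, with c_I = |C_I|. For a positive integer r, the induced matching number of G is at least r if and only if there exist subsets J_1,...,J_r of X such that no J_i is contained in the union of the others and c_{J_1}·c_{J_2}···c_{J_r} > 0. -/
/-- `a b : Fin r → V` describe a matching of size `r` in `G`:
the edges `aᵢbᵢ` are pairwise disjoint edges of `G`. -/
def IsMatchingPair {V : Type*} (G : SimpleGraph V) (r : ℕ) (a b : Fin r → V) : Prop :=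
  (∀ i, G.Adj (a i) (b i)) ∧ Function.Injective a ∧ Function.Injective b ∧
    (∀ i j, a i ≠ b j)

/-- An induced matching: a matching such that no two of its edges are joined by an edge. -/
def IsInducedMatchingPair {V : Type*} (G : SimpleGraph V) (r : ℕ) (a b : Fin r → V) : Prop :=
  IsMatchingPair G r a b ∧
    ∀ i j, i ≠ j → ¬ G.Adj (a i) (a j) ∧ ¬ G.Adj (a i) (b j) ∧ ¬ G.Adj (b i) (b j)

/-- An ordered matching: a matching `a₁b₁, …, a_r b_r` with `{a₁, …, a_r}` independent and
`aᵢbⱼ ∈ E(G) → i ≤ j`. -/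
def IsOrderedMatchingPair {V : Type*} (G : SimpleGraph V) (r : ℕ) (a b : Fin r → V) : Prop :=
  IsMatchingPair G r a b ∧ (∀ i j, ¬ G.Adj (a i) (a j)) ∧
    ∀ i j, G.Adj (a i) (b j) → i ≤ j

/-- The induced matching number. -/
noncomputable def indMatchNum {V : Type*} (G : SimpleGraph V) : ℕ :=
  sSup {r | ∃ a b : Fin r → V, IsInducedMatchingPair G r a b}

/-- The ordered matching number. -/
noncomputable def ordMatchNum {V : Type*} (G : SimpleGraph V) : ℕ :=
  sSup {r | ∃ a b : Fin r → V, IsOrderedMatchingPair G r a b}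

/-- A graph on `X ⊕ Y` is bipartite with parts `X` and `Y`: every edge joins
a vertex of `X` with a vertex of `Y`. -/
def IsBipartiteOn {X Y : Type*} (G : SimpleGraph (X ⊕ Y)) : Prop :=
  ∀ u v, G.Adj u v → (u.isLeft ∧ v.isRight) ∨ (u.isRight ∧ v.isLeft)

/-- `G` has no isolated vertices. -/
def NoIsolated {V : Type*} (G : SimpleGraph V) : Prop :=
  ∀ v, ∃ w, G.Adj v w

/-- `CSet G I` is the set of vertices of `Y` whose neighbourhood in `X` is exactly `I`. -/
def CSet {X Y : Type*} (G : SimpleGraph (X ⊕ Y)) (I : Set X) : Set Y :=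
  {y | ∀ x, G.Adj (Sum.inl x) (Sum.inr y) ↔ x ∈ I}

/-- `cNum G I` is the number of vertices of `Y` whose neighbourhood in `X` is exactly `I`. -/
noncomputable def cNum {X Y : Type*} (G : SimpleGraph (X ⊕ Y)) (I : Set X) : ℕ :=
  (CSet G I).ncard

/-!
In a bipartite graph an induced matching of size `r` is the same as vertices `x i ∈ X`,
`y i ∈ Y` with `x i ~ y j ↔ i = j`. Taking `J i = N(y i)` gives `y i ∈ C_{J i}`, and `x i`
witnesses that `J i` is not covered by the other `J j`; conversely such witnesses `x i`
together with any `y i ∈ C_{J i}` form an induced matching. Since the `y i` are distinct,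
induced matchings have at most `|Y|` edges, so the induced matching number is attained.
-/

def IsBipartiteInducedMatching {ι X Y : Type*} (G : SimpleGraph (X ⊕ Y)) (x : ι → X)
    (y : ι → Y) : Prop :=
  ∀ i j, G.Adj (.inl (x i)) (.inr (y j)) ↔ i = j

namespace IsBipartiteInducedMatching

variable {ι X Y : Type*} {G : SimpleGraph (X ⊕ Y)} {x : ι → X} {y : ι → Y}

theorem injective_left (h : IsBipartiteInducedMatching G x y) : Function.Injective x := by
  intro i j e
  have hadj : G.Adj (.inl (x j)) (.inr (y i)) := e ▸ (h i i).2 rfl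
  exact ((h j i).1 hadj).symm

theorem injective_right (h : IsBipartiteInducedMatching G x y) : Function.Injective y := by
  intro i j e
  have hadj : G.Adj (.inl (x i)) (.inr (y j)) := e ▸ (h i i).2 rfl
  exact (h i j).1 hadj

end IsBipartiteInducedMatching

namespace IsInducedMatchingPair

variable {V : Type*} {G : SimpleGraph V}

theorem of_zero (a b : Fin 0 → V) : IsInducedMatchingPair G 0 a b :=
  ⟨⟨finZeroElim, fun i => i.elim0, fun i => i.elim0, finZeroElim⟩, finZeroElim⟩

variable {n : ℕ} {a b : Fin n → V}

theorem comp_castLE (h : IsInducedMatchingPair G n a b) {r : ℕ} (hr : r ≤ n) :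
    IsInducedMatchingPair G r (a ∘ Fin.castLE hr) (b ∘ Fin.castLE hr) := by
  obtain ⟨⟨hadj, ha, hb, hab⟩, hind⟩ := h
  have hinj := Fin.castLE_injective hr
  exact ⟨⟨fun i => hadj _, ha.comp hinj, hb.comp hinj, fun i j => hab _ _⟩,
    fun i j hij => hind _ _ (hinj.ne hij)⟩

theorem not_adj (h : IsInducedMatchingPair G n a b) {i j : Fin n} (hij : i ≠ j) {u v : V}
    (hu : u = a i ∨ u = b i) (hv : v = a j ∨ v = b j) : ¬ G.Adj u v := by
  have hij' := h.2 i j hij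
  have hji' := h.2 j i hij.symm
  rcases hu with rfl | rfl <;> rcases hv with rfl | rfl
  · exact hij'.1
  · exact hij'.2.1
  · exact fun e => hji'.2.1 e.symm
  · exact hij'.2.2

end IsInducedMatchingPair

theorem le_indMatchNum_iff {V : Type*} {G : SimpleGraph V}
    (hbdd : BddAbove {r | ∃ a b : Fin r → V, IsInducedMatchingPair G r a b}) {r : ℕ} :
    r ≤ indMatchNum G ↔ ∃ a b : Fin r → V, IsInducedMatchingPair G r a b := by
  refine ⟨fun hr => ?_, fun h => le_csSup hbdd h⟩
  have hne : {r | ∃ a b : Fin r → V, IsInducedMatchingPair G r a b}.Nonempty :=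
    ⟨0, _, _, .of_zero finZeroElim finZeroElim⟩
  obtain ⟨a, b, h⟩ := Nat.sSup_mem hne hbdd
  exact ⟨_, _, h.comp_castLE hr⟩

namespace IsBipartiteOn

variable {X Y : Type*} {G : SimpleGraph (X ⊕ Y)}

theorem not_adj_inl_inl (hbip : IsBipartiteOn G) (u v : X) :
    ¬ G.Adj (.inl u) (.inl v) := by
  intro h
  rcases hbip _ _ h with ⟨-, h⟩ | ⟨h, -⟩ <;> simp at h

theorem not_adj_inr_inr (hbip : IsBipartiteOn G) (u v : Y) :
    ¬ G.Adj (.inr u) (.inr v) := by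
  intro h
  rcases hbip _ _ h with ⟨h, -⟩ | ⟨-, h⟩ <;> simp at h

theorem exists_adj_inl_inr (hbip : IsBipartiteOn G) {u v : X ⊕ Y} (h : G.Adj u v) :
    ∃ x y, G.Adj (.inl x) (.inr y) ∧ (.inl x = u ∨ .inl x = v) ∧ (.inr y = u ∨ .inr y = v) := by
  rcases u with x | y <;> rcases v with x' | y'
  · exact (hbip.not_adj_inl_inl _ _ h).elim
  · exact ⟨x, y', h, by simp⟩
  · exact ⟨x', y, h.symm, by simp⟩
  · exact (hbip.not_adj_inr_inr _ _ h).elim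

variable {r : ℕ}

theorem exists_isInducedMatchingPair_iff (hbip : IsBipartiteOn G) :
    (∃ a b : Fin r → X ⊕ Y, IsInducedMatchingPair G r a b) ↔
      ∃ (x : Fin r → X) (y : Fin r → Y), IsBipartiteInducedMatching G x y := by
  constructor
  · rintro ⟨a, b, h⟩
    choose x y hxy hx hy using fun i => hbip.exists_adj_inl_inr (h.1.1 i)
    refine ⟨x, y, fun i j => ⟨fun hadj => ?_, fun hij => hij ▸ hxy i⟩⟩
    by_contra hij
    exact h.not_adj hij (hx i) (hy j) hadj
  · rintro ⟨x, y, hxy⟩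
    refine ⟨fun i => .inl (x i), fun i => .inr (y i),
      ⟨fun i => (hxy i i).2 rfl, ?_, ?_, fun i j => Sum.inl_ne_inr⟩, fun i j hij => ?_⟩
    · exact Sum.inl_injective.comp hxy.injective_left
    · exact Sum.inr_injective.comp hxy.injective_right
    · exact ⟨hbip.not_adj_inl_inl _ _, fun h => hij ((hxy i j).1 h),
        hbip.not_adj_inr_inr _ _⟩

theorem bddAbove_isInducedMatchingPair [Fintype Y] (hbip : IsBipartiteOn G) :
    BddAbove {r | ∃ a b : Fin r → X ⊕ Y, IsInducedMatchingPair G r a b} := by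
  refine ⟨Fintype.card Y, fun r hr => ?_⟩
  obtain ⟨x, y, hxy⟩ := hbip.exists_isInducedMatchingPair_iff.1 hr
  simpa using Fintype.card_le_of_injective y hxy.injective_right

end IsBipartiteOn

theorem exists_isBipartiteInducedMatching_iff_exists_cSet {ι X Y : Type*}
    {G : SimpleGraph (X ⊕ Y)} :
    (∃ (x : ι → X) (y : ι → Y), IsBipartiteInducedMatching G x y) ↔
      ∃ J : ι → Set X,
        (∀ i, ¬ J i ⊆ ⋃ j ∈ ({i}ᶜ : Set ι), J j) ∧ ∀ i, (CSet G (J i)).Nonempty := by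
  simp only [Set.not_subset, Set.mem_iUnion, Set.mem_compl_iff, Set.mem_singleton_iff,
    exists_prop, not_exists, not_and]
  constructor
  · rintro ⟨x, y, hxy⟩
    refine ⟨fun i => {x' | G.Adj (.inl x') (.inr (y i))}, fun i => ⟨x i, (hxy i i).2 rfl, ?_⟩,
      fun i => ⟨y i, fun _ => Iff.rfl⟩⟩
    exact fun j hji hadj => hji ((hxy i j).1 hadj).symm
  · rintro ⟨J, hJ, hC⟩
    choose x hxJ hxJ' using hJ
    choose y hy using hC
    refine ⟨x, y, fun i j => (hy j (x i)).trans ⟨fun hxj => ?_, fun hij => hij ▸ hxJ i⟩⟩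
    by_contra hij
    exact hxJ' i j (Ne.symm hij) hxj

theorem indMatchNum_ge_iff_general {X Y : Type*} [Fintype Y]
    (G : SimpleGraph (X ⊕ Y)) (hbip : IsBipartiteOn G)
    (r : ℕ) :
    r ≤ indMatchNum G ↔
      ∃ J : Fin r → Set X,
        (∀ i, ¬ J i ⊆ ⋃ j ∈ ({i}ᶜ : Set (Fin r)), J j) ∧ (∀ i, 0 < cNum G (J i)) := by
  simp only [cNum, Set.ncard_pos (Set.toFinite _)]
  rw [le_indMatchNum_iff hbip.bddAbove_isInducedMatchingPair,
    hbip.exists_isInducedMatchingPair_iff, exists_isBipartiteInducedMatching_iff_exists_cSet]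

/-- The induced matching number of a bipartite graph `G` without isolated vertices is at
least `r` iff there are subsets `J₁, …, J_r` of `X`, none contained in the union of the
others, with `c_{J₁} ⋯ c_{J_r} > 0`. -/
theorem indMatchNum_ge_iff {X Y : Type*} [Fintype X] [Fintype Y]
    (G : SimpleGraph (X ⊕ Y)) (hbip : IsBipartiteOn G) (hiso : NoIsolated G)
    (r : ℕ) (hr : 0 < r) :
    r ≤ indMatchNum G ↔
      ∃ J : Fin r → Set X,
        (∀ i, ¬ J i ⊆ ⋃ j ∈ ({i}ᶜ : Set (Fin r)), J j) ∧ (∀ i, 0 < cNum G (J i)) :=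
  indMatchNum_ge_iff_general G hbip r
end

section
/- Let G be a bipartite graph on X ⊔ Y without isolated vertices, and for each I ⊆ X let c_I be the number of vertices in Y whose neighborhood equals I. For a positive integer r, the ordered matching number of G is at least r if and only if there exist subsets J_1,...,J_r of X with c_{J_1}···c_{J_r} > 0 such that for each i, J_i is not contained in J_1 ∪ ··· ∪ J_{i-1}. -/
lemma omp_bddAbove {V : Type*} [Fintype V] (G : SimpleGraph V) :
    BddAbove {r | ∃ a b : Fin r → V, IsOrderedMatchingPair G r a b} := by
  refine ⟨Fintype.card V, ?_⟩
  rintro n ⟨a, b, ⟨⟨-, ha, -, -⟩, -, -⟩⟩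
  simpa using Fintype.card_le_of_injective a ha

lemma omp_zero_mem {V : Type*} (G : SimpleGraph V) :
    0 ∈ {r | ∃ a b : Fin r → V, IsOrderedMatchingPair G r a b} :=
  ⟨Fin.elim0, Fin.elim0,
    ⟨⟨fun i => i.elim0, fun i => i.elim0, fun i => i.elim0, fun i => i.elim0⟩,
      fun i => i.elim0, fun i => i.elim0⟩⟩

lemma omp_restrict {V : Type*} (G : SimpleGraph V) {r s : ℕ} (hrs : r ≤ s)
    {a b : Fin s → V} (h : IsOrderedMatchingPair G s a b) :
    IsOrderedMatchingPair G r (a ∘ Fin.castLE hrs) (b ∘ Fin.castLE hrs) := by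
  obtain ⟨⟨hadj, hainj, hbinj, hab⟩, hind, hord⟩ := h
  refine ⟨⟨fun i => hadj _, ?_, ?_, fun i j => hab _ _⟩, fun i j => hind _ _, ?_⟩
  · exact fun i j hij => Fin.castLE_injective hrs (hainj hij)
  · exact fun i j hij => Fin.castLE_injective hrs (hbinj hij)
  · intro i j hadj'
    have := hord _ _ hadj'
    simp only [Fin.le_def, Fin.coe_castLE] at this ⊢
    exact this

lemma backward_aux {X Y : Type*} [Fintype X] [Fintype Y]
    (G : SimpleGraph (X ⊕ Y)) (hbip : IsBipartiteOn G)
    (r : ℕ) (J : Fin r → Set X)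
    (h1 : ∀ i, 0 < cNum G (J i))
    (h2 : ∀ i, ¬ J i ⊆ ⋃ j ∈ {j : Fin r | j < i}, J j) :
    ∃ a b : Fin r → X ⊕ Y, IsOrderedMatchingPair G r a b := by
  classical
  have hy : ∀ i, ∃ y : Y, y ∈ CSet G (J i) := by
    intro i
    have := h1 i
    rw [cNum, Set.ncard_pos (Set.toFinite _)] at this
    exact this
  choose y hyJ using hy
  have hx : ∀ i, ∃ x : X, x ∈ J i ∧ x ∉ ⋃ j ∈ {j : Fin r | j < i}, J j := by
    intro i
    obtain ⟨x, hx1, hx2⟩ := Set.not_subset.mp (h2 i)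
    exact ⟨x, hx1, hx2⟩
  choose x hxJ hxU using hx
  have hxnot : ∀ i j : Fin r, j < i → x i ∉ J j := by
    intro i j hji hmem
    exact hxU i (Set.mem_biUnion hji hmem)
  have hadjxy : ∀ i j : Fin r, G.Adj (Sum.inl (x i)) (Sum.inr (y j)) ↔ x i ∈ J j :=
    fun i j => hyJ j (x i)
  refine ⟨fun i => Sum.inl (x i), fun i => Sum.inr (y i), ⟨⟨?_, ?_, ?_, ?_⟩, ?_, ?_⟩⟩
  · exact fun i => (hadjxy i i).mpr (hxJ i)
  · intro i j hij
    simp only [Sum.inl.injEq] at hij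
    by_contra hne
    rcases lt_or_gt_of_ne hne with h | h
    · exact hxnot j i h (hij ▸ hxJ i)
    · exact hxnot i j h (hij ▸ hxJ j)
  · intro i j hij
    simp only [Sum.inr.injEq] at hij
    by_contra hne
    have hJeq : J i = J j := by
      ext x'
      rw [← hyJ i x', hij, hyJ j x']
    rcases lt_or_gt_of_ne hne with h | h
    · exact h2 j (hJeq ▸ fun x' hx' => Set.mem_biUnion h (hJeq ▸ hx'))
    · exact h2 i (fun x' hx' => Set.mem_biUnion h (hJeq ▸ hx'))
  · intro i j
    simp
  · intro i j hadj'
    rcases hbip _ _ hadj' with ⟨h1', h2'⟩ | ⟨h1', h2'⟩ <;> simp at h1' h2'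
  · intro i j hadj'
    by_contra hle
    push_neg at hle
    exact hxnot i j hle ((hadjxy i j).mp hadj')

theorem forward_aux {X Y : Type*} [Fintype X] [Fintype Y]
    (G : SimpleGraph (X ⊕ Y)) (hbip : IsBipartiteOn G)
    (r : ℕ) (a b : Fin r → X ⊕ Y) (h : IsOrderedMatchingPair G r a b) :
    ∃ J : Fin r → Set X,
      (∀ i, 0 < cNum G (J i)) ∧
      (∀ i, ¬ J i ⊆ ⋃ j ∈ {j : Fin r | j < i}, J j) := by
  classical
  obtain ⟨⟨hadj, hainj, hbinj, hab⟩, hind, hord⟩ := h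
  have key : ∀ i, ∃ p : X × Y,
      (a i = Sum.inl p.1 ∧ b i = Sum.inr p.2) ∨ (a i = Sum.inr p.2 ∧ b i = Sum.inl p.1) := by
    intro i
    rcases hbip _ _ (hadj i) with ⟨hl, hr⟩ | ⟨hr, hl⟩
    · obtain ⟨xi, hx⟩ := Sum.isLeft_iff.mp hl
      obtain ⟨yi, hy⟩ := Sum.isRight_iff.mp hr
      exact ⟨(xi, yi), Or.inl ⟨hx, hy⟩⟩
    · obtain ⟨xi, hx⟩ := Sum.isLeft_iff.mp hl
      obtain ⟨yi, hy⟩ := Sum.isRight_iff.mp hr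
      exact ⟨(xi, yi), Or.inr ⟨hy, hx⟩⟩
  choose p hp using key
  set x : Fin r → X := fun i => (p i).1 with hxdef
  set y : Fin r → Y := fun i => (p i).2 with hydef
  set st : Fin r → Prop := fun i => a i = Sum.inl (x i) with hstdef
  have hst : ∀ i, st i → a i = Sum.inl (x i) ∧ b i = Sum.inr (y i) := by
    intro i hi
    rcases hp i with ⟨h1, h2⟩ | ⟨h1, h2⟩
    · exact ⟨h1, h2⟩
    · exact absurd (hi.symm.trans h1) (by simp)
  have hfl : ∀ i, ¬ st i → a i = Sum.inr (y i) ∧ b i = Sum.inl (x i) := by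
    intro i hi
    rcases hp i with ⟨h1, h2⟩ | ⟨h1, h2⟩
    · exact absurd h1 hi
    · exact ⟨h1, h2⟩
  have hE : ∀ i, G.Adj (Sum.inl (x i)) (Sum.inr (y i)) := by
    intro i
    by_cases hi : st i
    · obtain ⟨h1, h2⟩ := hst i hi
      rw [← h1, ← h2]; exact hadj i
    · obtain ⟨h1, h2⟩ := hfl i hi
      have := (hadj i).symm
      rw [h1, h2] at this; exact this
  have hyinj : Function.Injective y := by
    intro i j hij
    by_cases hi : st i <;> by_cases hj : st j
    · exact hbinj (((hst i hi).2.trans (by rw [hij])).trans (hst j hj).2.symm)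
    · exact absurd (((hfl j hj).1.trans (by rw [← hij])).trans (hst i hi).2.symm) (hab j i)
    · exact absurd (((hfl i hi).1.trans (by rw [hij])).trans (hst j hj).2.symm) (hab i j)
    · exact hainj (((hfl i hi).1.trans (by rw [hij])).trans (hfl j hj).1.symm)
  -- rank function
  set k : ℕ := (Finset.univ.filter fun i => ¬ st i).card with hkdef
  set ρ' : Fin r → ℕ := fun i =>
    if st i then k + (Finset.univ.filter fun j => st j ∧ j < i).card
    else (Finset.univ.filter fun j => ¬ st j ∧ i < j).card with hρ'def
  have hkst : k + (Finset.univ.filter fun i => st i).card = r := by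
    rw [hkdef, add_comm]
    simpa using Finset.card_filter_add_card_filter_not (s := Finset.univ)
      (p := fun i : Fin r => st i)
  have hstlt : ∀ i, st i → (Finset.univ.filter fun j => st j ∧ j < i).card <
      (Finset.univ.filter fun i => st i).card := by
    intro i hi
    apply Finset.card_lt_card
    constructor
    · intro j hj
      simp only [Finset.mem_filter] at hj ⊢
      exact ⟨hj.1, hj.2.1⟩
    · intro hcon
      have := hcon (Finset.mem_filter.mpr ⟨Finset.mem_univ i, hi⟩)
      rw [Finset.mem_filter] at this
      exact absurd this.2.2 (lt_irrefl i)
  have hfllt : ∀ i, ¬ st i → (Finset.univ.filter fun j => ¬ st j ∧ i < j).card < k := by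
    intro i hi
    apply Finset.card_lt_card
    constructor
    · intro j hj
      simp only [Finset.mem_filter] at hj ⊢
      exact ⟨hj.1, hj.2.1⟩
    · intro hcon
      have := hcon (Finset.mem_filter.mpr ⟨Finset.mem_univ i, hi⟩)
      rw [Finset.mem_filter] at this
      exact absurd this.2.2 (lt_irrefl i)
  have hρlt : ∀ i, ρ' i < r := by
    intro i
    simp only [hρ'def]
    by_cases hi : st i
    · rw [if_pos hi]
      have := hstlt i hi
      omega
    · rw [if_neg hi]
      have h1 := hfllt i hi
      have h2 : k ≤ r := by
        rw [hkdef]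
        simpa using Finset.card_filter_le (Finset.univ : Finset (Fin r)) (fun i => ¬ st i)
      omega
  -- strict monotonicity facts
  have hstmono : ∀ i j : Fin r, st i → st j → i < j →
      (Finset.univ.filter fun l => st l ∧ l < i).card <
      (Finset.univ.filter fun l => st l ∧ l < j).card := by
    intro i j hi hj hij
    apply Finset.card_lt_card
    constructor
    · intro l hl
      simp only [Finset.mem_filter] at hl ⊢
      exact ⟨hl.1, hl.2.1, hl.2.2.trans hij⟩
    · intro hcon
      have := hcon (Finset.mem_filter.mpr ⟨Finset.mem_univ i, hi, hij⟩)
      rw [Finset.mem_filter] at this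
      exact absurd this.2.2 (lt_irrefl i)
  have hflmono : ∀ i j : Fin r, ¬ st i → ¬ st j → i < j →
      (Finset.univ.filter fun l => ¬ st l ∧ j < l).card <
      (Finset.univ.filter fun l => ¬ st l ∧ i < l).card := by
    intro i j hi hj hij
    apply Finset.card_lt_card
    constructor
    · intro l hl
      simp only [Finset.mem_filter] at hl ⊢
      exact ⟨hl.1, hl.2.1, hij.trans hl.2.2⟩
    · intro hcon
      have := hcon (Finset.mem_filter.mpr ⟨Finset.mem_univ j, hj, hij⟩)
      rw [Finset.mem_filter] at this
      exact absurd this.2.2 (lt_irrefl j)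
  have hstmono' : ∀ i j : Fin r, i ≤ j →
      (Finset.univ.filter fun l => st l ∧ l < i).card ≤
      (Finset.univ.filter fun l => st l ∧ l < j).card := by
    intro i j hij
    apply Finset.card_le_card
    intro l hl
    simp only [Finset.mem_filter] at hl ⊢
    exact ⟨hl.1, hl.2.1, lt_of_lt_of_le hl.2.2 hij⟩
  have hflmono' : ∀ i j : Fin r, j ≤ i →
      (Finset.univ.filter fun l => ¬ st l ∧ i < l).card ≤
      (Finset.univ.filter fun l => ¬ st l ∧ j < l).card := by
    intro i j hij
    apply Finset.card_le_card
    intro l hl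
    simp only [Finset.mem_filter] at hl ⊢
    exact ⟨hl.1, hl.2.1, lt_of_le_of_lt hij hl.2.2⟩
  have hρinj : Function.Injective (fun i => ρ' i) := by
    intro i j hij
    simp only [hρ'def] at hij
    by_contra hne
    by_cases hi : st i <;> by_cases hj : st j
    · rw [if_pos hi, if_pos hj] at hij
      rcases lt_trichotomy i j with h | h | h
      · exact absurd hij (by have := hstmono i j hi hj h; omega)
      · exact hne h
      · exact absurd hij (by have := hstmono j i hj hi h; omega)
    · rw [if_pos hi, if_neg hj] at hij
      have := hfllt j hj; omega
    · rw [if_neg hi, if_pos hj] at hij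
      have := hfllt i hi; omega
    · rw [if_neg hi, if_neg hj] at hij
      rcases lt_trichotomy i j with h | h | h
      · exact absurd hij (by have := hflmono i j hi hj h; omega)
      · exact hne h
      · exact absurd hij (by have := hflmono j i hj hi h; omega)
  have hL : ∀ i j, G.Adj (Sum.inl (x i)) (Sum.inr (y j)) → ρ' i ≤ ρ' j := by
    intro i j hedge
    simp only [hρ'def]
    by_cases hi : st i <;> by_cases hj : st j
    · rw [if_pos hi, if_pos hj]
      have h1 : G.Adj (a i) (b j) := by
        rw [(hst i hi).1, (hst j hj).2]; exact hedge
      have := hstmono' i j (hord i j h1)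
      omega
    · exfalso
      have h1 : G.Adj (a i) (a j) := by
        rw [(hst i hi).1, (hfl j hj).1]; exact hedge
      exact hind i j h1
    · rw [if_neg hi, if_pos hj]
      have := hfllt i hi
      omega
    · rw [if_neg hi, if_neg hj]
      have h1 : G.Adj (a j) (b i) := by
        rw [(hfl j hj).1, (hfl i hi).2]; exact hedge.symm
      exact hflmono' i j (hord j i h1)
  set ρ : Fin r → Fin r := fun i => ⟨ρ' i, hρlt i⟩ with hρdef
  have hρinj2 : Function.Injective ρ := by
    intro i j hij
    exact hρinj (by simpa [hρdef, Fin.ext_iff] using hij)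
  have hρbij : Function.Bijective ρ := Finite.injective_iff_bijective.mp hρinj2
  set σ := Equiv.ofBijective ρ hρbij with hσdef
  refine ⟨fun q => {x' | G.Adj (Sum.inl x') (Sum.inr (y (σ.symm q)))}, ?_, ?_⟩
  · intro q
    rw [cNum]
    rw [Set.ncard_pos (Set.toFinite _)]
    exact ⟨y (σ.symm q), fun x' => Iff.rfl⟩
  · intro q hsub
    have hx : x (σ.symm q) ∈ {x' | G.Adj (Sum.inl x') (Sum.inr (y (σ.symm q)))} := hE _
    have := hsub hx
    simp only [Set.mem_iUnion, Set.mem_setOf_eq, exists_prop] at this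
    obtain ⟨q', hq', hadj'⟩ := this
    have hle := hL (σ.symm q) (σ.symm q') hadj'
    have e1 : ρ' (σ.symm q) = q.val := by
      have : ρ (σ.symm q) = q := σ.apply_symm_apply q
      simpa [hρdef, Fin.ext_iff] using this
    have e2 : ρ' (σ.symm q') = q'.val := by
      have : ρ (σ.symm q') = q' := σ.apply_symm_apply q'
      simpa [hρdef, Fin.ext_iff] using this
    rw [e1, e2] at hle
    exact absurd hle (by exact_mod_cast not_le.mpr hq')

/-- The ordered matching number of a bipartite graph `G` without isolated vertices is at
least `r` iff there are subsets `J₁, …, J_r` of `X` with `c_{J₁} ⋯ c_{J_r} > 0` such that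
each `Jᵢ` is not contained in `J₁ ∪ ⋯ ∪ J_{i-1}`. -/
theorem ordMatchNum_ge_iff {X Y : Type*} [Fintype X] [Fintype Y]
    (G : SimpleGraph (X ⊕ Y)) (hbip : IsBipartiteOn G) (hiso : NoIsolated G)
    (r : ℕ) (hr : 0 < r) :
    r ≤ ordMatchNum G ↔
      ∃ J : Fin r → Set X,
        (∀ i, 0 < cNum G (J i)) ∧
        (∀ i, ¬ J i ⊆ ⋃ j ∈ {j : Fin r | j < i}, J j) := by
  constructor
  · intro h
    have hne : {r' | ∃ a b : Fin r' → X ⊕ Y, IsOrderedMatchingPair G r' a b}.Nonempty :=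
      ⟨0, omp_zero_mem G⟩
    rw [ordMatchNum] at h
    obtain ⟨a, b, hab⟩ := Nat.sSup_mem hne (omp_bddAbove G)
    exact forward_aux G hbip r _ _ (omp_restrict G h hab)
  · rintro ⟨J, h1, h2⟩
    obtain ⟨a, b, hab⟩ := backward_aux G hbip r J h1 h2
    exact le_csSup (omp_bddAbove G) ⟨a, b, hab⟩
end

section
/- Let G be a bipartite graph on X ⊔ Y without isolated vertices, r a positive integer, and for each I ⊆ X let c_I count vertices of Y with neighborhood exactly I. Then ord-match(G) ≤ r if and only if for every choice of subsets J_1,...,J_r of X with c_{J_1}···c_{J_r} > 0 and each J_i not contained in J_1 ∪ ··· ∪ J_{i-1}, the union J_1 ∪ ··· ∪ J_r equals X. -/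
open Sum

lemma restrict_omp {V : Type*} (G : SimpleGraph V) {m n : ℕ} (h : m ≤ n) {a b : Fin n → V}
    (hab : IsOrderedMatchingPair G n a b) :
    IsOrderedMatchingPair G m (a ∘ Fin.castLE h) (b ∘ Fin.castLE h) := by
  obtain ⟨⟨h1, h2, h3, h4⟩, h5, h6⟩ := hab
  refine ⟨⟨fun i => h1 _, h2.comp (Fin.castLE_injective h), h3.comp (Fin.castLE_injective h),
    fun i j => h4 _ _⟩, fun i j => h5 _ _, fun i j hadj => ?_⟩
  exact h6 _ _ hadj

lemma exists_staircase {X Y : Type*} (G : SimpleGraph (X ⊕ Y)) (hbip : IsBipartiteOn G)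
    {n : ℕ} {a b : Fin n → X ⊕ Y} (h : IsOrderedMatchingPair G n a b) :
    ∃ (J : Fin n → Set X) (x : Fin n → X) (y : Fin n → Y),
      (∀ i, y i ∈ CSet G (J i)) ∧ (∀ i, x i ∈ J i) ∧
      ∀ i j, j < i → x i ∉ J j := by
  obtain ⟨⟨hadj, hainj, hbinj, hab⟩, hindep, hord⟩ := h
  have H : ∀ i : Fin n, ∃ (p : X × Y × ℕ), G.Adj (inl p.1) (inr p.2.1) ∧
      ((a i = inl p.1 ∧ b i = inr p.2.1 ∧ p.2.2 = n + i) ∨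
       (a i = inr p.2.1 ∧ b i = inl p.1 ∧ p.2.2 = n - 1 - i)) := by
    intro i
    rcases hbip _ _ (hadj i) with ⟨h1, h2⟩ | ⟨h1, h2⟩
    · obtain ⟨xi, hxi⟩ := Sum.isLeft_iff.mp h1
      obtain ⟨yi, hyi⟩ := Sum.isRight_iff.mp h2
      exact ⟨(xi, yi, n + i), by rw [← hxi, ← hyi]; exact hadj i, Or.inl ⟨hxi, hyi, rfl⟩⟩
    · obtain ⟨yi, hyi⟩ := Sum.isRight_iff.mp h1
      obtain ⟨xi, hxi⟩ := Sum.isLeft_iff.mp h2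
      exact ⟨(xi, yi, n - 1 - i), by rw [← hxi, ← hyi]; exact (hadj i).symm,
        Or.inr ⟨hyi, hxi, rfl⟩⟩
  choose p hp1 hp2 using H
  set x0 : Fin n → X := fun i => (p i).1 with hx0def
  set y0 : Fin n → Y := fun i => (p i).2.1 with hy0def
  set k : Fin n → ℕ := fun i => (p i).2.2 with hkdef
  have core : ∀ i j, G.Adj (inl (x0 i)) (inr (y0 j)) → k i ≤ k j := by
    intro i j hadj'
    have hi := i.isLt
    have hj := j.isLt
    rcases hp2 i with ⟨hai, hbi, hki⟩ | ⟨hai, hbi, hki⟩ <;>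
      rcases hp2 j with ⟨haj, hbj, hkj⟩ | ⟨haj, hbj, hkj⟩
    · have hle : i ≤ j := hord i j (by rw [hai, hbj]; exact hadj')
      rw [Fin.le_def] at hle
      simp only [hkdef]
      omega
    · exact ((hindep i j) (by rw [hai, haj]; exact hadj')).elim
    · simp only [hkdef]
      omega
    · have hle : j ≤ i := hord j i (by rw [haj, hbi]; exact hadj'.symm)
      rw [Fin.le_def] at hle
      simp only [hkdef]
      omega
  have kinj : Function.Injective k := by
    intro i j hk
    have hi := i.isLt
    have hj := j.isLt
    rcases hp2 i with ⟨hai, hbi, hki⟩ | ⟨hai, hbi, hki⟩ <;>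
      rcases hp2 j with ⟨haj, hbj, hkj⟩ | ⟨haj, hbj, hkj⟩ <;>
      · simp only [hkdef] at hk
        exact Fin.ext (by omega)
  let σ := Tuple.sort k
  have hmono : Monotone (k ∘ σ) := Tuple.monotone_sort k
  refine ⟨fun i => {x | G.Adj (inl x) (inr (y0 (σ i)))}, fun i => x0 (σ i), fun i => y0 (σ i),
    fun i x => Iff.rfl, fun i => hp1 (σ i), ?_⟩
  intro i j hji hmem
  have h1 : k (σ i) ≤ k (σ j) := core _ _ hmem
  have h2 : k (σ j) ≤ k (σ i) := hmono hji.le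
  have heq : σ j = σ i := kinj (le_antisymm h2 h1)
  exact absurd (σ.injective heq) hji.ne

lemma matching_of_staircase {X Y : Type*} (G : SimpleGraph (X ⊕ Y)) (hbip : IsBipartiteOn G)
    {n : ℕ} (J : Fin n → Set X) (x : Fin n → X) (y : Fin n → Y)
    (hy : ∀ i, y i ∈ CSet G (J i)) (hx : ∀ i, x i ∈ J i)
    (hxx : ∀ i j, j < i → x i ∉ J j) :
    IsOrderedMatchingPair G n (fun i => inl (x i)) (fun i => inr (y i)) := by
  have hadj : ∀ i j, G.Adj (inl (x i)) (inr (y j)) ↔ x i ∈ J j := fun i j => hy j (x i)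
  refine ⟨⟨fun i => (hadj i i).mpr (hx i), ?_, ?_, fun i j => by simp⟩, ?_, ?_⟩
  · intro i j hij
    have h : x i = x j := by simpa using hij
    rcases lt_trichotomy i j with hlt | heq | hlt
    · exact absurd (h ▸ hx i) (hxx j i hlt)
    · exact heq
    · exact absurd (h.symm ▸ hx j) (hxx i j hlt)
  · intro i j hij
    have h : y i = y j := by simpa using hij
    have hJ : J i = J j := by
      ext z
      rw [← hy i z, h, hy j z]
    rcases lt_trichotomy i j with hlt | heq | hlt
    · exact absurd (by rw [hJ]; exact hx j : x j ∈ J i) (hxx j i hlt)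
    · exact heq
    · exact absurd (by rw [← hJ]; exact hx i : x i ∈ J j) (hxx i j hlt)
  · intro i j hadj'
    rcases hbip _ _ hadj' with ⟨_, h2⟩ | ⟨h1, _⟩
    · simp at h2
    · simp at h1
  · intro i j hadj'
    by_contra hcon
    push_neg at hcon
    exact hxx i j hcon ((hadj i j).mp hadj')

/-- For a bipartite graph `G` without isolated vertices, `ord-match(G) ≤ r` iff for every
family `J₁, …, J_r` of subsets of `X` with `c_{J₁} ⋯ c_{J_r} > 0` and each `Jᵢ` not
contained in `J₁ ∪ ⋯ ∪ J_{i-1}`, the union `J₁ ∪ ⋯ ∪ J_r` is all of `X`. -/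
theorem ordMatchNum_le_iff {X Y : Type*} [Fintype X] [Fintype Y]
    (G : SimpleGraph (X ⊕ Y)) (hbip : IsBipartiteOn G) (hiso : NoIsolated G)
    (r : ℕ) (hr : 0 < r) :
    ordMatchNum G ≤ r ↔
      ∀ J : Fin r → Set X,
        (∀ i, 0 < cNum G (J i)) →
        (∀ i, ¬ J i ⊆ ⋃ j ∈ {j : Fin r | j < i}, J j) →
        (⋃ i, J i) = Set.univ := by
  classical
  have hbdd : BddAbove {s | ∃ a b : Fin s → X ⊕ Y, IsOrderedMatchingPair G s a b} := by
    refine ⟨Fintype.card (X ⊕ Y), fun s hs => ?_⟩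
    obtain ⟨a, b, ⟨_, ha, _, _⟩, _, _⟩ := hs
    simpa using Fintype.card_le_of_injective a ha
  constructor
  · intro hle J hc hsub
    by_contra hne
    obtain ⟨x0, hx0⟩ : ∃ x0, x0 ∉ ⋃ i, J i := by
      by_contra hcon
      push_neg at hcon
      exact hne (Set.eq_univ_of_forall hcon)
    obtain ⟨w, hw⟩ := hiso (inl x0)
    obtain ⟨y0, hy0⟩ : ∃ y0 : Y, w = inr y0 := by
      rcases hbip _ _ hw with ⟨_, h2⟩ | ⟨h1, _⟩
      · exact Sum.isRight_iff.mp h2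
      · simp at h1
    rw [hy0] at hw
    have hwit : ∀ i : Fin r, ∃ xi, xi ∈ J i ∧ ∀ j, j < i → xi ∉ J j := by
      intro i
      obtain ⟨xi, hxi1, hxi2⟩ := Set.not_subset.mp (hsub i)
      refine ⟨xi, hxi1, fun j hj hmem => hxi2 ?_⟩
      exact Set.mem_biUnion hj hmem
    choose xs hxs1 hxs2 using hwit
    have hYw : ∀ i : Fin r, (CSet G (J i)).Nonempty := by
      intro i
      have h := hc i
      rwa [cNum, Set.ncard_pos (Set.toFinite _)] at h
    choose ys hys using hYw
    set Jh : Fin (r+1) → Set X := Fin.snoc J {z | G.Adj (inl z) (inr y0)} with hJh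
    set xh : Fin (r+1) → X := Fin.snoc xs x0 with hxh
    set yh : Fin (r+1) → Y := Fin.snoc ys y0 with hyh
    have hmatch : IsOrderedMatchingPair G (r+1) (fun i => inl (xh i)) (fun i => inr (yh i)) := by
      refine matching_of_staircase G hbip Jh xh yh ?_ ?_ ?_
      · intro i
        refine Fin.lastCases ?_ ?_ i
        · simp only [hJh, hyh, Fin.snoc_last]
          exact fun z => Iff.rfl
        · intro i
          simp only [hJh, hyh, Fin.snoc_castSucc]
          exact hys i
      · intro i
        refine Fin.lastCases ?_ ?_ i
        · simp only [hJh, hxh, Fin.snoc_last]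
          exact hw
        · intro i
          simp only [hJh, hxh, Fin.snoc_castSucc]
          exact hxs1 i
      · intro i j
        refine Fin.lastCases ?_ (fun i' => ?_) i <;> refine Fin.lastCases ?_ (fun j' => ?_) j
        · intro hji
          exact absurd hji (lt_irrefl _)
        · intro _ hmem
          simp only [hJh, hxh, Fin.snoc_last, Fin.snoc_castSucc] at hmem
          exact hx0 (Set.mem_iUnion.mpr ⟨j', hmem⟩)
        · intro hji
          exact absurd hji (Fin.castSucc_lt_last i').asymm
        · intro hji hmem
          simp only [hJh, hxh, Fin.snoc_castSucc] at hmem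
          exact hxs2 i' j' (Fin.castSucc_lt_castSucc_iff.mp hji) hmem
    have hmem : (r+1) ∈ {s | ∃ a b : Fin s → X ⊕ Y, IsOrderedMatchingPair G s a b} :=
      ⟨_, _, hmatch⟩
    have hge := le_csSup hbdd hmem
    simp only [ordMatchNum] at hle
    omega
  · intro hJ
    simp only [ordMatchNum]
    apply csSup_le
    · exact ⟨0, Fin.elim0, Fin.elim0, ⟨fun i => i.elim0, fun i => i.elim0, fun i => i.elim0,
        fun i => i.elim0⟩, fun i => i.elim0, fun i => i.elim0⟩
    intro s hs
    by_contra hsr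
    push_neg at hsr
    obtain ⟨a, b, hab⟩ := hs
    have h1 : r + 1 ≤ s := hsr
    obtain ⟨J, x, y, hy, hx, hxx⟩ := exists_staircase G hbip (restrict_omp G h1 hab)
    have hun := hJ (fun i => J i.castSucc) ?_ ?_
    · have hmem : x (Fin.last r) ∈ ⋃ i : Fin r, J i.castSucc := hun ▸ Set.mem_univ _
      obtain ⟨i, hi⟩ := Set.mem_iUnion.mp hmem
      exact hxx (Fin.last r) i.castSucc (Fin.castSucc_lt_last i) hi
    · intro i
      rw [cNum, Set.ncard_pos (Set.toFinite _)]
      exact ⟨y _, hy _⟩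
    · intro i hsub
      have hmem := hsub (hx i.castSucc)
      simp only [Set.mem_iUnion, Set.mem_setOf_eq] at hmem
      obtain ⟨j, hj, hmem⟩ := hmem
      exact hxx i.castSucc j.castSucc (Fin.castSucc_lt_castSucc_iff.mpr hj) hmem
end

section
/- For every non-negative integer n, the triple sum ∑_{i=1}^{n-1} ∑_{j=1}^{min(n-i, i)} ∑_{k=0}^{min(n-i-j, j)} 1 equals -25/144 - n/12 + 7n²/24 + n³/36 + (-1)ⁿ/16 + ((3+√3 i)/54)·((-1-√3 i)/2)ⁿ + ((3-√3 i)/54)·((-1+√3 i)/2)ⁿ. -/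
open Finset Complex

/-!
Let `T n` count the triples `k ≤ j ≤ i` with `1 ≤ j` and `i + j + k ≤ n`. Since
`(-1)^n = 1 - 2 (n % 2)` and the two conjugate cube-root terms add up to `(1 - n % 3) / 9`,
the claim is `144 T n = 4 n³ + 42 n² - 12 n - 18 (n % 2) - 16 (n % 3)`.
A triple with `i + j + k = n` is determined by `(j, k)` with `2 j + k ≤ n`, and the pairs with
`2 j + k = n` correspond to the integers `j` with `n / 3 ≤ j ≤ n / 2`. Hence the second
difference of `T` is `⌊n / 2⌋ + 1 - ⌈n / 3⌉`, which is also the second difference of the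
right-hand side.
-/

def triples (n : ℕ) : Finset (ℕ × ℕ × ℕ) :=
  (range (n + 1) ×ˢ range (n + 1) ×ˢ range (n + 1)).filter fun p =>
    1 ≤ p.2.1 ∧ p.2.1 ≤ p.1 ∧ p.2.2 ≤ p.2.1 ∧ p.1 + p.2.1 + p.2.2 ≤ n

def pairs (t : ℕ) : Finset (ℕ × ℕ) :=
  (range (t + 1) ×ˢ range (t + 1)).filter fun p =>
    1 ≤ p.1 ∧ p.2 ≤ p.1 ∧ 2 * p.1 + p.2 ≤ t

lemma sum_eq_card_triples (n : ℕ) :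
    ∑ i ∈ Icc 1 (n - 1), ∑ j ∈ Icc 1 (min (n - i) i),
        ∑ _k ∈ Icc 0 (min (n - i - j) j), 1 = #(triples n) := by
  calc _ = #((Icc 1 (n - 1)).sigma fun i =>
          (Icc 1 (min (n - i) i)).sigma fun j => Icc 0 (min (n - i - j) j)) := by
        simp only [card_sigma, sum_const, smul_eq_mul, mul_one]
    _ = #(triples n) := by
      refine card_nbij' (fun x => (x.1, x.2.1, x.2.2)) (fun p => ⟨p.1, p.2.1, p.2.2⟩)
        ?_ ?_ (fun _ _ => rfl) (fun _ _ => rfl) <;>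
      simp only [Set.MapsTo, triples, coe_filter, mem_product, mem_range,
        Set.mem_ofPred_eq, coe_sigma, Set.mem_sigma_iff, mem_coe, mem_Icc, Sigma.forall,
        Prod.forall, and_imp] <;>
      intros <;> omega

lemma card_pairs_succ (t : ℕ) :
    #(pairs (t + 1)) = #(pairs t) + #(Icc ((t + 3) / 3) ((t + 1) / 2)) := by
  rw [← card_filter_add_card_filter_not (s := pairs (t + 1)) (fun p => 2 * p.1 + p.2 ≤ t)]
  congr 1
  · congr 1
    ext ⟨j, k⟩
    simp only [pairs, mem_filter, mem_product, mem_range]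
    omega
  · refine card_nbij' Prod.fst (fun j => (j, t + 1 - 2 * j)) ?_ ?_ ?_ ?_ <;>
      simp only [Set.MapsTo, Set.LeftInvOn, pairs, coe_filter, mem_filter, mem_product,
        mem_range, Set.mem_ofPred_eq, coe_Icc, Set.mem_Icc, Prod.forall, Prod.mk.injEq, and_imp,
        true_and, implies_true] <;>
      intros <;> omega

lemma card_triples_succ (n : ℕ) : #(triples (n + 1)) = #(triples n) + #(pairs (n + 1)) := by
  rw [← card_filter_add_card_filter_not (s := triples (n + 1))
    (fun p => p.1 + p.2.1 + p.2.2 ≤ n)]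
  congr 1
  · congr 1
    ext ⟨i, j, k⟩
    simp only [triples, mem_filter, mem_product, mem_range]
    omega
  · refine card_nbij' Prod.snd (fun p => (n + 1 - p.1 - p.2, p)) ?_ ?_ ?_ ?_ <;>
      simp only [Set.MapsTo, Set.LeftInvOn, triples, pairs, coe_filter, mem_filter, mem_product,
        mem_range, Set.mem_ofPred_eq, Prod.forall, Prod.mk.injEq, and_imp, and_true,
        implies_true] <;>
      intros <;> omega

lemma card_triples_closed_form (n : ℕ) :
    144 * (#(triples n) : ℤ)
      = 4 * n ^ 3 + 42 * n ^ 2 - 12 * n - 18 * (n % 2 : ℕ) - 16 * (n % 3 : ℕ) := by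
  induction n using Nat.twoStepInduction with
  | zero => rfl
  | one => rfl
  | more n ih₀ ih₁ =>
    have hT₁ : #(triples (n + 1)) = #(triples n) + #(pairs (n + 1)) := card_triples_succ n
    have hT₂ : #(triples (n + 2)) = #(triples (n + 1)) + #(pairs (n + 2)) :=
      card_triples_succ (n + 1)
    have hP : #(pairs (n + 2)) = #(pairs (n + 1)) + ((n + 2) / 2 + 1 - (n + 4) / 3) := by
      rw [card_pairs_succ, Nat.card_Icc]
    have hstep : (144 * ((n + 2) / 2 + 1 - (n + 4) / 3 : ℕ) : ℤ)
        = 24 * n + 108 - 18 * (((n : ℤ) + 2) % 2 - 2 * (((n : ℤ) + 1) % 2) + (n : ℤ) % 2)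
          - 16 * (((n : ℤ) + 2) % 3 - 2 * (((n : ℤ) + 1) % 3) + (n : ℤ) % 3) := by
      clear ih₀ ih₁ hT₁ hT₂ hP
      have : n % 6 < 6 := n.mod_lt (by norm_num)
      interval_cases h : n % 6 <;> omega
    have hP₁ : (#(pairs (n + 1)) : ℤ) = #(triples (n + 1)) - #(triples n) := by
      rw [hT₁]; push_cast; ring
    rw [hT₂, hP]
    push_cast at *
    linear_combination 2 * ih₁ - ih₀ + hstep + 144 * hP₁

lemma neg_one_pow_eq_one_sub_two_mul_mod_two {R : Type*} [Ring R] (n : ℕ) :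
    (-1 : R) ^ n = 1 - 2 * (n % 2 : ℕ) := by
  rw [neg_one_pow_eq_pow_mod_two]
  rcases Nat.mod_two_eq_zero_or_one n with h | h <;> norm_num [h]

lemma cube_root_terms_eq (n : ℕ) :
    (3 + Real.sqrt 3 * I) / 54 * ((-1 - Real.sqrt 3 * I) / 2) ^ n
      + (3 - Real.sqrt 3 * I) / 54 * ((-1 + Real.sqrt 3 * I) / 2) ^ n
      = (1 - (n % 3 : ℕ)) / 9 := by
  have hs : ((Real.sqrt 3 : ℝ) : ℂ) ^ 2 = 3 := by
    rw [← ofReal_pow, Real.sq_sqrt (by norm_num)]; norm_num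
  have hω : ((-1 + Real.sqrt 3 * I) / 2) ^ 3 = 1 := by grind [I_sq]
  have hω' : ((-1 - Real.sqrt 3 * I) / 2) ^ 3 = 1 := by grind [I_sq]
  rw [pow_eq_pow_mod n hω, pow_eq_pow_mod n hω']
  have : n % 3 < 3 := n.mod_lt (by norm_num)
  interval_cases n % 3 <;> grind [I_sq]

/-- Closed form for `∑_{i=1}^{n-1} ∑_{j=1}^{min(n-i,i)} ∑_{k=0}^{min(n-i-j,j)} 1`. -/
theorem triple_sum_closed_form (n : ℕ) :
    ((∑ i ∈ Finset.Icc 1 (n - 1), ∑ j ∈ Finset.Icc 1 (min (n - i) i),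
        ∑ _k ∈ Finset.Icc 0 (min (n - i - j) j), 1 : ℕ) : ℂ)
      = -25 / 144 - (n : ℂ) / 12 + 7 * (n : ℂ) ^ 2 / 24 + (n : ℂ) ^ 3 / 36
        + (-1 : ℂ) ^ n / 16
        + ((3 + Real.sqrt 3 * I) / 54) * ((-1 - Real.sqrt 3 * I) / 2) ^ n
        + ((3 - Real.sqrt 3 * I) / 54) * ((-1 + Real.sqrt 3 * I) / 2) ^ n := by
  have hcount : (144 * (#(triples n) : ℂ)) = 4 * n ^ 3 + 42 * n ^ 2 - 12 * n
      - 18 * (n % 2 : ℕ) - 16 * (n % 3 : ℕ) := by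
    have h := congrArg (Int.cast : ℤ → ℂ) (card_triples_closed_form n)
    push_cast at h
    exact h
  rw [sum_eq_card_triples]
  linear_combination hcount / 144 - neg_one_pow_eq_one_sub_two_mul_mod_two (R := ℂ) n / 16
    - cube_root_terms_eq n
end

section
/- Let a_n = ∑_{i=1}^{n-1} ∑_{j=1}^{n-i} ∑_{k=0}^{min(n-i-j,j)} 1. Then a_n satisfies the recurrence a_n = 3a_{n-1} - 2a_{n-2} - 2a_{n-3} + 3a_{n-4} - a_{n-5} for all n ≥ 5, with initial values a_0 = 0, a_1 = 0, a_2 = 1, a_3 = 4, a_4 = 9. -/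
open Finset

/-- `a n = ∑_{i=1}^{n-1} ∑_{j=1}^{n-i} ∑_{k=0}^{min(n-i-j,j)} 1`. -/
def aSeq (n : ℕ) : ℕ :=
  ∑ i ∈ Finset.Icc 1 (n - 1), ∑ j ∈ Finset.Icc 1 (n - i),
    ∑ _k ∈ Finset.Icc 0 (min (n - i - j) j), 1

lemma Msum (m : ℕ) : ∑ j ∈ Finset.Icc 1 m, min (m - j) j = m * m / 4 := by
  induction m with
  | zero => simp
  | succ m ih =>
    rw [Finset.sum_Icc_succ_top (by omega)]
    have h1 : ∑ j ∈ Finset.Icc 1 m, min (m + 1 - j) j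
        = ∑ j ∈ Finset.Icc 1 m, (min (m - j) j + if m + 1 ≤ 2 * j then 1 else 0) := by
      refine Finset.sum_congr rfl fun j hj => ?_
      simp only [Finset.mem_Icc] at hj
      split_ifs with h <;> omega
    rw [h1, Finset.sum_add_distrib, ih, Finset.sum_ite, Finset.sum_const, Finset.sum_const]
    have h2 : Finset.filter (fun j => m + 1 ≤ 2 * j) (Finset.Icc 1 m)
        = Finset.Icc (m / 2 + 1) m := by
      ext j
      simp only [Finset.mem_filter, Finset.mem_Icc]
      omega
    rw [h2]
    simp only [smul_eq_mul, mul_one, mul_zero, add_zero, Nat.card_Icc]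
    have h3 : min (m + 1 - (m + 1)) (m + 1) = 0 := by omega
    rw [h3]
    obtain ⟨t, rfl | rfl⟩ : ∃ t, m = 2 * t ∨ m = 2 * t + 1 := ⟨m / 2, by omega⟩
    · have e1 : 2 * t * (2 * t) = 4 * (t * t) := by ring
      have e2 : (2 * t + 1) * (2 * t + 1) = 4 * (t * t) + 4 * t + 1 := by ring
      rw [e1, e2]
      generalize t * t = u
      omega
    · have e1 : (2 * t + 1) * (2 * t + 1) = 4 * (t * t) + 4 * t + 1 := by ring
      have e2 : (2 * t + 1 + 1) * (2 * t + 1 + 1) = 4 * (t * t) + 8 * t + 4 := by ring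
      rw [e1, e2]
      generalize t * t = u
      omega

lemma Bval (m : ℕ) : ∑ j ∈ Finset.Icc 1 m, (min (m - j) j + 1) = m + m * m / 4 := by
  rw [Finset.sum_add_distrib, Msum, Finset.sum_const, smul_eq_mul, mul_one, Nat.card_Icc]
  omega

/-- Partial sums of `g i = i + i²/4`. -/
def Sfun (n : ℕ) : ℕ := ∑ i ∈ Finset.Icc 1 n, (i + i * i / 4)

lemma Sfun_succ (n : ℕ) : Sfun (n + 1) = Sfun n + ((n + 1) + (n + 1) * (n + 1) / 4) := by
  unfold Sfun
  rw [Finset.sum_Icc_succ_top (by omega)]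

lemma aSeq_eq (n : ℕ) : aSeq n = Sfun (n - 1) := by
  unfold aSeq Sfun
  have h1 : ∀ i ∈ Finset.Icc 1 (n - 1),
      (∑ j ∈ Finset.Icc 1 (n - i), ∑ _k ∈ Finset.Icc 0 (min (n - i - j) j), 1)
        = (n - i) + (n - i) * (n - i) / 4 := by
    intro i hi
    rw [← Bval (n - i)]
    refine Finset.sum_congr rfl fun j hj => ?_
    rw [Finset.sum_const, smul_eq_mul, mul_one, Nat.card_Icc]
    omega
  rw [Finset.sum_congr rfl h1]
  refine Finset.sum_nbij' (fun i => n - i) (fun i => n - i) ?_ ?_ ?_ ?_ ?_ <;>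
    intro a ha <;> simp only [Finset.mem_Icc] at * <;> omega

lemma gkey (k : ℕ) :
    ((k + 5) + (k + 5) * (k + 5) / 4) + 2 * ((k + 2) + (k + 2) * (k + 2) / 4)
      = 2 * ((k + 4) + (k + 4) * (k + 4) / 4) + ((k + 1) + (k + 1) * (k + 1) / 4) := by
  obtain ⟨t, rfl | rfl⟩ : ∃ t, k = 2 * t ∨ k = 2 * t + 1 := ⟨k / 2, by omega⟩
  · have e5 : (2 * t + 5) * (2 * t + 5) = 4 * (t * t) + 20 * t + 25 := by ring
    have e2 : (2 * t + 2) * (2 * t + 2) = 4 * (t * t) + 8 * t + 4 := by ring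
    have e4 : (2 * t + 4) * (2 * t + 4) = 4 * (t * t) + 16 * t + 16 := by ring
    have e1 : (2 * t + 1) * (2 * t + 1) = 4 * (t * t) + 4 * t + 1 := by ring
    rw [e5, e2, e4, e1]
    generalize t * t = u
    omega
  · have e5 : (2 * t + 1 + 5) * (2 * t + 1 + 5) = 4 * (t * t) + 24 * t + 36 := by ring
    have e2 : (2 * t + 1 + 2) * (2 * t + 1 + 2) = 4 * (t * t) + 12 * t + 9 := by ring
    have e4 : (2 * t + 1 + 4) * (2 * t + 1 + 4) = 4 * (t * t) + 20 * t + 25 := by ring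
    have e1 : (2 * t + 1 + 1) * (2 * t + 1 + 1) = 4 * (t * t) + 8 * t + 4 := by ring
    rw [e5, e2, e4, e1]
    generalize t * t = u
    omega

/-- `a_n = 3a_{n-1} - 2a_{n-2} - 2a_{n-3} + 3a_{n-4} - a_{n-5}` for `n ≥ 5`, with initial
values `a₀ = 0`, `a₁ = 0`, `a₂ = 1`, `a₃ = 4`, `a₄ = 9`. -/
theorem aSeq_recurrence :
    (∀ n : ℕ, 5 ≤ n →
      (aSeq n : ℤ) = 3 * aSeq (n - 1) - 2 * aSeq (n - 2) - 2 * aSeq (n - 3)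
        + 3 * aSeq (n - 4) - aSeq (n - 5)) ∧
    aSeq 0 = 0 ∧ aSeq 1 = 0 ∧ aSeq 2 = 1 ∧ aSeq 3 = 4 ∧ aSeq 4 = 9 := by
  constructor
  · intro n hn
    obtain ⟨m, rfl⟩ : ∃ m, n = m + 5 := ⟨n - 5, by omega⟩
    rcases m with _ | k
    · decide
    · have A5 : aSeq (k + 1 + 5) = Sfun (k + 5) := by rw [aSeq_eq]; congr 1 <;> omega
      have A4 : aSeq (k + 1 + 5 - 1) = Sfun (k + 4) := by rw [aSeq_eq]; congr 1 <;> omega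
      have A3 : aSeq (k + 1 + 5 - 2) = Sfun (k + 3) := by rw [aSeq_eq]; congr 1 <;> omega
      have A2 : aSeq (k + 1 + 5 - 3) = Sfun (k + 2) := by rw [aSeq_eq]; congr 1 <;> omega
      have A1 : aSeq (k + 1 + 5 - 4) = Sfun (k + 1) := by rw [aSeq_eq]; congr 1 <;> omega
      have A0 : aSeq (k + 1 + 5 - 5) = Sfun k := by rw [aSeq_eq]; congr 1 <;> omega
      rw [A5, A4, A3, A2, A1, A0]
      have s1 := Sfun_succ k
      have s2 := Sfun_succ (k + 1)
      have s3 := Sfun_succ (k + 2)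
      have s4 := Sfun_succ (k + 3)
      have g := gkey k
      have e2 : k + 1 + 1 = k + 2 := by omega
      have e3 : k + 2 + 1 = k + 3 := by omega
      have e4 : k + 3 + 1 = k + 4 := by omega
      have s5 := Sfun_succ (k + 4)
      have e5 : k + 4 + 1 = k + 5 := by omega
      rw [e2] at s2; rw [e3] at s3; rw [e4] at s4; rw [e5] at s5
      generalize (k + 1) + (k + 1) * (k + 1) / 4 = b1 at s1 g
      generalize (k + 2) + (k + 2) * (k + 2) / 4 = b2 at s2 g
      generalize (k + 3) + (k + 3) * (k + 3) / 4 = b3 at s3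
      generalize (k + 4) + (k + 4) * (k + 4) / 4 = b4 at s4 g
      generalize (k + 5) + (k + 5) * (k + 5) / 4 = b5 at s5 g
      omega
  · refine ⟨rfl, rfl, rfl, rfl, rfl⟩
end

section
/- For every non-negative integer n, the quadruple sum ∑_{i=1}^{n-1} ∑_{j=1}^{min(n-i,i)} ∑_{k=0}^{min(n-i-j,j)} ∑_{l=0}^{min(n-i-j-k,k)} 1 satisfies the linear recurrence a_n = 2a_{n-1} - a_{n-3} - 2a_{n-5} + 2a_{n-6} + a_{n-8} - 2a_{n-10} + a_{n-11} for all n ≥ 11, with initial values a_1 = 0, a_2 = 1, a_3 = 3, a_4 = 7, a_5 = 12, a_6 = 20, a_7 = 30, a_8 = 44, a_9 = 61, a_{10} = 83, a_{11} = 109. -/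
open Finset

/-- `a n = ∑_{i=1}^{n-1} ∑_{j=1}^{min(n-i,i)} ∑_{k=0}^{min(n-i-j,j)}
∑_{l=0}^{min(n-i-j-k,k)} 1`. -/
def quadSum (n : ℕ) : ℕ :=
  ∑ i ∈ Finset.Icc 1 (n - 1), ∑ j ∈ Finset.Icc 1 (min (n - i) i),
    ∑ k ∈ Finset.Icc 0 (min (n - i - j) j),
      ∑ _l ∈ Finset.Icc 0 (min (n - i - j - k) k), 1

/-!
Substituting `i = a + b + c + d`, `j = b + c + d`, `k = c + d`, `l = d` and `e = n - i - j - k - l`,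
`quadSum n` counts the solutions of `a + e + 2b + 3c + 4d = n` with `(b, c, d) ≠ 0`; the
`n + 1` solutions with `b = c = d = 0` make up the rest. Splitting the solutions of
`w₀ x₀ + ∑ wᵢ xᵢ = n + w₀` according to whether `x₀ = 0` shows that the forward difference of
step `w₀` turns the solution count for the weights `(w₀, w)` into that for `w`, shifted by `w₀`.
So the composite of the differences of steps `1, 1, 2, 3, 4` kills the solution count, and it
kills `n + 1` as well; expanded, this operator, with characteristic polynomial
`(1 - x)²(1 - x²)(1 - x³)(1 - x⁴)`, is the recurrence.
-/

open fwdDiff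

-- The cutoff `x i ≤ n` loses nothing only when all weights are positive.
def weightedSolutions {k : ℕ} (w : Fin k → ℕ) (n : ℕ) : Finset (Fin k → ℕ) :=
  {x ∈ Fintype.piFinset fun _ ↦ range (n + 1) | ∑ i, w i * x i = n}

def fwdDiffs : {k : ℕ} → (Fin k → ℕ) → (ℕ → ℤ) → ℕ → ℤ
  | 0, _, f => f
  | _ + 1, w, f => fwdDiffs (Fin.tail w) (Δ_[w 0] f)

section
variable {k : ℕ} {w : Fin k → ℕ}

lemma mem_weightedSolutions (hw : ∀ i, 0 < w i) {n : ℕ} {x : Fin k → ℕ} :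
    x ∈ weightedSolutions w n ↔ ∑ i, w i * x i = n := by
  simp only [weightedSolutions, mem_filter, Fintype.mem_piFinset, mem_range,
    and_iff_right_iff_imp]
  rintro rfl i
  calc x i ≤ w i * x i := Nat.le_mul_of_pos_left _ (hw i)
    _ ≤ ∑ j, w j * x j :=
      single_le_sum (f := fun j ↦ w j * x j) (fun j _ ↦ Nat.zero_le _) (mem_univ i)
    _ < _ := Nat.lt_succ_self _

lemma card_filter_weightedSolutions_cons_eq_zero (hw : ∀ i, 0 < w i) {w₀ : ℕ} (hw₀ : 0 < w₀)
    (n : ℕ) : #{x ∈ weightedSolutions (Fin.cons w₀ w) n | x 0 = 0} = #(weightedSolutions w n) := by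
  have hcons : ∀ i, 0 < (Fin.cons w₀ w : Fin (k + 1) → ℕ) i := Fin.cases hw₀ hw
  refine card_nbij' Fin.tail (fun y ↦ (Fin.cons 0 y : Fin (k + 1) → ℕ)) ?_ ?_ ?_ ?_
  · intro x hx
    simp only [mem_coe, mem_filter, mem_weightedSolutions hcons, mem_weightedSolutions hw,
      Fin.sum_univ_succ, Fin.cons_zero, Fin.cons_succ, Fin.tail] at hx ⊢
    simpa [hx.2] using hx.1
  · intro y hy
    simp only [mem_coe, mem_filter, mem_weightedSolutions hcons, mem_weightedSolutions hw,
      Fin.sum_univ_succ, Fin.cons_zero, Fin.cons_succ] at hy ⊢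
    simpa using hy
  · intro x hx
    simp only [mem_coe, mem_filter] at hx
    rw [← hx.2]
    exact Fin.cons_self_tail x
  · intro y _
    exact Fin.tail_cons _ _

lemma card_filter_weightedSolutions_cons_ne_zero (hw : ∀ i, 0 < w i) {w₀ : ℕ} (hw₀ : 0 < w₀)
    (n : ℕ) :
    #{x ∈ weightedSolutions (Fin.cons w₀ w) (n + w₀) | x 0 ≠ 0} =
      #(weightedSolutions (Fin.cons w₀ w) n) := by
  have hcons : ∀ i, 0 < (Fin.cons w₀ w : Fin (k + 1) → ℕ) i := Fin.cases hw₀ hw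
  refine card_nbij' (fun x ↦ Fin.cons (x 0 - 1) (Fin.tail x))
    (fun y ↦ Fin.cons (y 0 + 1) (Fin.tail y)) ?_ ?_ ?_ ?_
  · intro x hx
    simp only [mem_coe, mem_filter, mem_weightedSolutions hcons, Fin.sum_univ_succ,
      Fin.cons_zero, Fin.cons_succ, Fin.tail] at hx ⊢
    have := Nat.mul_sub_one w₀ (x 0)
    have := Nat.le_mul_of_pos_right w₀ (Nat.pos_of_ne_zero hx.2)
    omega
  · intro y hy
    simp only [mem_coe, mem_filter, mem_weightedSolutions hcons, Fin.sum_univ_succ,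
      Fin.cons_zero, Fin.cons_succ, Fin.tail] at hy ⊢
    refine ⟨?_, by omega⟩
    rw [mul_add_one]
    omega
  · intro x hx
    simp only [mem_coe, mem_filter] at hx
    simp only [Fin.cons_zero, Nat.sub_add_cancel (Nat.pos_of_ne_zero hx.2), Fin.tail_cons,
      Fin.cons_self_tail]
  · intro y _
    simp only [Fin.cons_zero, Nat.add_sub_cancel, Fin.tail_cons, Fin.cons_self_tail]

lemma fwdDiff_card_weightedSolutions_cons (hw : ∀ i, 0 < w i) {w₀ : ℕ} (hw₀ : 0 < w₀) :
    Δ_[w₀] (fun n ↦ (#(weightedSolutions (Fin.cons w₀ w) n) : ℤ)) =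
      fun n ↦ (#(weightedSolutions w (n + w₀)) : ℤ) := by
  funext n
  rw [fwdDiff, ← card_filter_add_card_filter_not (p := fun x ↦ x 0 = 0),
    card_filter_weightedSolutions_cons_eq_zero hw hw₀,
    card_filter_weightedSolutions_cons_ne_zero hw hw₀]
  push_cast
  ring

lemma fwdDiffs_cons (w₀ : ℕ) (w : Fin k → ℕ) (f : ℕ → ℤ) :
    fwdDiffs (Fin.cons w₀ w) f = fwdDiffs w (Δ_[w₀] f) := rfl

lemma fwdDiffs_comp_add (w : Fin k → ℕ) (f : ℕ → ℤ) (m n : ℕ) :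
    fwdDiffs w (fun r ↦ f (r + m)) n = fwdDiffs w f (n + m) := by
  induction k generalizing f with
  | zero => rfl
  | succ k ih =>
    rw [fwdDiffs, fwdDiffs, ← ih]
    congr 1
    funext r
    exact fwdDiff_comp_add _ f m r

theorem fwdDiffs_card_weightedSolutions (hw : ∀ i, 0 < w i) (n : ℕ) :
    fwdDiffs w (fun m ↦ (#(weightedSolutions w m) : ℤ)) n =
      if n + ∑ i, w i = 0 then 1 else 0 := by
  induction k generalizing n with
  | zero =>
    simp only [fwdDiffs, weightedSolutions, univ_eq_empty, sum_empty, eq_comm (a := 0)]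
    split_ifs <;> simp_all
  | succ k ih =>
    obtain ⟨w₀, w, rfl⟩ : ∃ w₀ w', w = Fin.cons w₀ w' := ⟨_, _, (Fin.cons_self_tail w).symm⟩
    have hw₀ : 0 < w₀ := hw 0
    have hw' : ∀ i, 0 < w i := fun i ↦ hw i.succ
    rw [fwdDiffs_cons, fwdDiff_card_weightedSolutions_cons hw' hw₀,
      fwdDiffs_comp_add w (fun m ↦ (#(weightedSolutions w m) : ℤ)), ih hw', Fin.sum_cons,
      add_assoc]

end

def quadWeights : Fin 5 → ℕ := ![1, 1, 2, 3, 4]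

lemma quadWeights_pos : ∀ i, 0 < quadWeights i := by decide

lemma mem_weightedSolutions_quadWeights {n : ℕ} {x : Fin 5 → ℕ} :
    x ∈ weightedSolutions quadWeights n ↔ x 0 + x 1 + 2 * x 2 + 3 * x 3 + 4 * x 4 = n := by
  rw [mem_weightedSolutions quadWeights_pos, Fin.sum_univ_five]
  simp [quadWeights]

lemma fwdDiffs_quadWeights (f : ℕ → ℤ) (n : ℕ) :
    fwdDiffs quadWeights f n = f (n + 11) - 2 * f (n + 10) + f (n + 8) + 2 * f (n + 6)
      - 2 * f (n + 5) - f (n + 3) + 2 * f (n + 1) - f n := by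
  simp only [quadWeights, fwdDiffs, fwdDiff, Fin.tail_vecCons, Matrix.cons_val_fin_one,
    Matrix.cons_val_zero]
  ring_nf

lemma quadSum_eq_card_filter (n : ℕ) :
    quadSum n = #{x ∈ weightedSolutions quadWeights n | x 2 + x 3 + x 4 ≠ 0} := by
  rw [quadSum, sum_sigma', sum_sigma', sum_sigma', sum_const, smul_eq_mul, mul_one]
  refine card_nbij'
    (fun x ↦ ![x.1.1.1 - x.1.1.2, n - (x.1.1.1 + x.1.1.2 + x.1.2 + x.2), x.1.1.2 - x.1.2,
      x.1.2 - x.2, x.2])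
    (fun y ↦ ⟨⟨⟨y 0 + y 2 + y 3 + y 4, y 2 + y 3 + y 4⟩, y 3 + y 4⟩, y 4⟩) ?_ ?_ ?_ ?_
  · rintro ⟨⟨⟨i, j⟩, k⟩, l⟩ hx
    simp only [coe_sigma, coe_filter, Set.mem_sigma_iff, coe_Icc, Set.mem_Icc, Set.mem_ofPred_eq,
      mem_weightedSolutions_quadWeights, Matrix.cons_val_zero, Matrix.cons_val_one,
      Matrix.cons_val, ne_eq, Nat.add_eq_zero_iff] at hx ⊢
    omega
  · intro y hy
    simp only [coe_sigma, coe_filter, Set.mem_sigma_iff, coe_Icc, Set.mem_Icc, Set.mem_ofPred_eq,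
      mem_weightedSolutions_quadWeights] at hy ⊢
    omega
  · rintro ⟨⟨⟨i, j⟩, k⟩, l⟩ hx
    simp only [coe_sigma, Set.mem_sigma_iff, coe_Icc, Set.mem_Icc] at hx
    simp only [Matrix.cons_val_zero, Matrix.cons_val, Sigma.mk.injEq, heq_eq_eq, and_true]
    omega
  · intro y hy
    simp only [coe_filter, Set.mem_ofPred_eq, mem_weightedSolutions_quadWeights] at hy
    funext i
    fin_cases i <;>
      simp only [Fin.zero_eta, Fin.mk_one, Fin.reduceFinMk, Matrix.cons_val_zero,
        Matrix.cons_val_one, Matrix.cons_val, add_tsub_cancel_right] <;> omega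

lemma card_filter_weightedSolutions_quadWeights_eq_zero (n : ℕ) :
    #{x ∈ weightedSolutions quadWeights n | x 2 + x 3 + x 4 = 0} = n + 1 := by
  rw [← card_range (n + 1)]
  refine card_nbij' (fun x ↦ x 0) (fun a ↦ ![a, n - a, 0, 0, 0]) ?_ ?_ ?_ ?_
  · intro x hx
    simp only [coe_filter, coe_range, Set.mem_ofPred_eq, Set.mem_Iio,
      mem_weightedSolutions_quadWeights] at hx ⊢
    omega
  · intro a ha
    simp only [coe_filter, coe_range, Set.mem_ofPred_eq, Set.mem_Iio,
      mem_weightedSolutions_quadWeights, Matrix.cons_val_zero, Matrix.cons_val_one,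
      Matrix.cons_val, mul_zero, add_zero, and_true] at ha ⊢
    omega
  · intro x hx
    simp only [coe_filter, Set.mem_ofPred_eq, mem_weightedSolutions_quadWeights] at hx
    funext i
    fin_cases i <;>
      simp only [Fin.zero_eta, Fin.mk_one, Fin.reduceFinMk, Matrix.cons_val_zero,
        Matrix.cons_val_one, Matrix.cons_val] <;> omega
  · intro a _
    rfl

lemma card_weightedSolutions_quadWeights (n : ℕ) :
    #(weightedSolutions quadWeights n) = quadSum n + (n + 1) := by
  rw [← card_filter_add_card_filter_not (p := fun x ↦ x 2 + x 3 + x 4 = 0),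
    card_filter_weightedSolutions_quadWeights_eq_zero, quadSum_eq_card_filter, add_comm]

/-- `a_n = 2a_{n-1} - a_{n-3} - 2a_{n-5} + 2a_{n-6} + a_{n-8} - 2a_{n-10} + a_{n-11}`
for `n ≥ 11`, with the stated initial values. -/
theorem quadSum_recurrence :
    (∀ n : ℕ, 11 ≤ n →
      (quadSum n : ℤ) = 2 * quadSum (n - 1) - quadSum (n - 3) - 2 * quadSum (n - 5)
        + 2 * quadSum (n - 6) + quadSum (n - 8) - 2 * quadSum (n - 10)
        + quadSum (n - 11)) ∧
    quadSum 1 = 0 ∧ quadSum 2 = 1 ∧ quadSum 3 = 3 ∧ quadSum 4 = 7 ∧ quadSum 5 = 12 ∧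
    quadSum 6 = 20 ∧ quadSum 7 = 30 ∧ quadSum 8 = 44 ∧ quadSum 9 = 61 ∧
    quadSum 10 = 83 ∧ quadSum 11 = 109 := by
  refine ⟨fun n hn ↦ ?_, by decide⟩
  obtain ⟨m, rfl⟩ := Nat.exists_eq_add_of_le' hn
  have key := fwdDiffs_card_weightedSolutions quadWeights_pos m
  rw [fwdDiffs_quadWeights, if_neg (by simp [quadWeights, Fin.sum_univ_five])] at key
  simp only [card_weightedSolutions_quadWeights] at key
  push_cast at key
  simp only [Nat.add_sub_cancel_right, Nat.reduceSubDiff]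
  linarith
end
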